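/- arXiv:2305.14311 — 2 statements merged into one kernel-verified Lean document; each statement's English description precedes it below -/
import Mathlib

section
/- Let A be a ρ-replicable learning algorithm with randomness source R: Pr_{S,S'~D^n, r~R}[A(S,r) ≠ A(S',r)] ≤ ρ. Then for any ν ∈ [ρ,1), with probability at least 1−ν over r ~ R, there exists a hypothesis h (depending on r) such that Pr_{S~D^n}[A(S,r) = h] ≥ 1 − ρ/ν. -/
open MeasureTheory

/-!
Fix the random string `r` and call it bad when no hypothesis is output with probability at least
`1 - t`, where `t = ρ / ν`. For bad `r`, whatever hypothesis `A(S, r)` is, an independent `S'`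
gives a different one with probability more than `t`; so the probability of disagreement given a
bad `r` exceeds `t`. Markov's inequality, applied to this conditional disagreement probability,
whose mean is at most `ρ`, bounds the probability of a bad `r` by `ρ / t = ν`.
-/

open scoped ENNReal

section

variable {α : Type*} [MeasurableSpace α] {μ : Measure α}

theorem one_sub_toReal_measure_le_toReal_measure_compl [IsProbabilityMeasure μ] (s : Set α) :
    1 - (μ s).toReal ≤ (μ sᶜ).toReal := by
  have h := ENNReal.toReal_mono (by finiteness) (measure_univ_le_add_compl (μ := μ) s)
  rw [measure_univ, ENNReal.toReal_one,
    ENNReal.toReal_add (measure_ne_top _ _) (measure_ne_top _ _)] at h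
  linarith

theorem one_sub_le_toReal_measure_of_measure_compl_le [IsProbabilityMeasure μ] {s : Set α}
    {ν : ℝ} (hν : 0 ≤ ν) (hs : μ sᶜ ≤ ENNReal.ofReal ν) : 1 - ν ≤ (μ s).toReal := by
  have h := one_sub_toReal_measure_le_toReal_measure_compl (μ := μ) sᶜ
  rw [compl_compl] at h
  linarith [ENNReal.toReal_le_of_le_ofReal hν hs]

/-- Unlike `meas_ge_le_lintegral_div`, this holds also at `ε = 0`, since `0 / 0 = 0` in `ℝ≥0∞`. -/
theorem measure_lt_le_lintegral_div {f : α → ℝ≥0∞} (hf : AEMeasurable f μ) (ε : ℝ≥0∞) :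
    μ {x | ε < f x} ≤ (∫⁻ x, f x ∂μ) / ε := by
  rcases eq_or_ne ε 0 with rfl | hε₀
  · rcases eq_or_ne (∫⁻ x, f x ∂μ) 0 with h | h
    · have hf0 := ae_iff.1 ((lintegral_eq_zero_iff' hf).1 h)
      simpa [h, pos_iff_ne_zero] using hf0.le
    · simp [ENNReal.div_zero h]
  rcases eq_or_ne ε ∞ with rfl | hε
  · simp
  calc μ {x | ε < f x} ≤ μ {x | ε ≤ f x} :=
        measure_mono <| Set.ofPred_subset_ofPred.2 fun _ => le_of_lt
    _ ≤ (∫⁻ x, f x ∂μ) / ε := meas_ge_le_lintegral_div hf hε₀ hε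

end

section

variable {S H : Type*} [MeasurableSpace S] {μ : Measure S} [IsProbabilityMeasure μ]

theorem lt_toReal_measure_ne_of_forall_fiber_lt (a : S → H) {t : ℝ}
    (ha : ∀ y, (μ {x | a x = y}).toReal < 1 - t) (x : S) :
    t < (μ {x' | a x' ≠ a x}).toReal := by
  have h := one_sub_toReal_measure_le_toReal_measure_compl (μ := μ) {x' | a x' = a x}
  rw [Set.compl_ofPred] at h
  linarith [ha (a x)]

theorem ofReal_lt_prod_of_forall_fiber_lt (a : S → H) {t : ℝ} (ht : 0 ≤ t)
    (ha : ∀ y, (μ {x | a x = y}).toReal < 1 - t) {T : Set (S × S)} (hT : MeasurableSet T)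
    (hne : {p : S × S | a p.1 ≠ a p.2} ⊆ T) : ENNReal.ofReal t < μ.prod μ T := by
  rw [Measure.prod_apply hT]
  calc ENNReal.ofReal t = ∫⁻ _, ENNReal.ofReal t ∂μ := by simp
    _ < ∫⁻ x, μ (Prod.mk x ⁻¹' T) ∂μ :=
      lintegral_strict_mono (IsProbabilityMeasure.ne_zero μ)
        (measurable_measure_prodMk_left hT).aemeasurable (by simp) (ae_of_all _ fun x => ?_)
  refine ((ENNReal.ofReal_lt_iff_lt_toReal ht (measure_ne_top _ _)).2
    (lt_toReal_measure_ne_of_forall_fiber_lt a ha x)).trans_le (measure_mono fun x' hx' => ?_)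
  exact hne (Ne.symm hx')

end

theorem measure_forall_fiber_lt_le_div {S H R : Type*} [MeasurableSpace S] [MeasurableSpace R]
    (A : S → R → H) (Dn : Measure S) [IsProbabilityMeasure Dn] (ℛ : Measure R) [SFinite ℛ]
    {t : ℝ} (ht : 0 ≤ t) :
    ℛ {r | ∀ h, (Dn {s | A s r = h}).toReal < 1 - t} ≤
      ((Dn.prod Dn).prod ℛ) {x | A x.1.1 x.2 ≠ A x.1.2 x.2} / ENNReal.ofReal t := by
  set N : Set ((S × S) × R) := {x | A x.1.1 x.2 ≠ A x.1.2 x.2}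
  -- `A` is not assumed measurable, so we pass to a measurable hull of the disagreement set
  set T := toMeasurable ((Dn.prod Dn).prod ℛ) N
  have hT : MeasurableSet T := measurableSet_toMeasurable _ _
  calc ℛ {r | ∀ h, (Dn {s | A s r = h}).toReal < 1 - t}
      ≤ ℛ {r | ENNReal.ofReal t < (Dn.prod Dn) ((·, r) ⁻¹' T)} :=
        measure_mono fun r hr => ofReal_lt_prod_of_forall_fiber_lt (fun s => A s r) ht hr
          (measurable_prodMk_right hT) fun _ hp => subset_toMeasurable _ N hp
    _ ≤ (∫⁻ r, (Dn.prod Dn) ((·, r) ⁻¹' T) ∂ℛ) / ENNReal.ofReal t :=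
        measure_lt_le_lintegral_div (measurable_measure_prodMk_right hT).aemeasurable _
    _ = ((Dn.prod Dn).prod ℛ) N / ENNReal.ofReal t := by
        rw [← Measure.prod_apply_symm hT, measure_toMeasurable]

theorem ofReal_div_ofReal_div_le {ρ ν : ℝ} (hρ : 0 ≤ ρ) (hρν : ρ ≤ ν) :
    ENNReal.ofReal ρ / ENNReal.ofReal (ρ / ν) ≤ ENNReal.ofReal ν := by
  rcases hρ.eq_or_lt with rfl | hρ
  · simp
  rw [← ENNReal.ofReal_div_of_pos (div_pos hρ (hρ.trans_le hρν)), div_div_cancel₀ hρ.ne']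

theorem replicable_implies_pseudo_globally_stable_general
    {S H R : Type*} [MeasurableSpace S] [MeasurableSpace R]
    (A : S → R → H)
    (Dn : Measure S) [IsProbabilityMeasure Dn]
    (ℛ : Measure R) [IsProbabilityMeasure ℛ]
    (ρ ν : ℝ)
    (hrep : (((Dn.prod Dn).prod ℛ) {x | A x.1.1 x.2 ≠ A x.1.2 x.2}).toReal ≤ ρ)
    (hν : ρ ≤ ν) :
    1 - ν ≤ (ℛ {r | ∃ h : H, 1 - ρ / ν ≤ (Dn {s | A s r = h}).toReal}).toReal := by
  have hρ : 0 ≤ ρ := ENNReal.toReal_nonneg.trans hrep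
  apply one_sub_le_toReal_measure_of_measure_compl_le (hρ.trans hν)
  simp only [Set.compl_ofPred, not_exists, not_le]
  calc _ ≤ _ / ENNReal.ofReal (ρ / ν) :=
        measure_forall_fiber_lt_le_div A Dn ℛ (div_nonneg hρ (hρ.trans hν))
    _ ≤ ENNReal.ofReal ρ / ENNReal.ofReal (ρ / ν) := by
        gcongr
        exact (ENNReal.le_ofReal_iff_toReal_le (measure_ne_top _ _) hρ).2 hrep
    _ ≤ ENNReal.ofReal ν := ofReal_div_ofReal_div_le hρ hν

/-- A ρ-replicable algorithm is (1 − ρ/ν, 1 − ν)-pseudo-globally stable: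
with probability at least 1 − ν over the random string r, there is a hypothesis
output with probability at least 1 − ρ/ν over the sample. -/
theorem replicable_implies_pseudo_globally_stable
    {S H R : Type*} [MeasurableSpace S] [MeasurableSpace H] [MeasurableSpace R]
    (A : S → R → H)
    (Dn : Measure S) [IsProbabilityMeasure Dn]
    (ℛ : Measure R) [IsProbabilityMeasure ℛ]
    (ρ ν : ℝ)
    (hrep : (((Dn.prod Dn).prod ℛ) {x | A x.1.1 x.2 ≠ A x.1.2 x.2}).toReal ≤ ρ)
    (hν : ρ ≤ ν) (hν1 : ν < 1) :
    1 - ν ≤ (ℛ {r | ∃ h : H, 1 - ρ / ν ≤ (Dn {s | A s r = h}).toReal}).toReal :=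
  replicable_implies_pseudo_globally_stable_general A Dn ℛ ρ ν hrep hν
end

section
/- (Bretagnolle–Huber–Carol inequality) Let p = (p₁,…,p_k) be a probability vector and let (p̂₁,…,p̂_k) be the empirical frequencies from n i.i.d. samples of the corresponding categorical distribution. Then for every ε ∈ (0,1), Pr[Σ_{i=1}^k |p̂_i − p_i| ≥ ε] ≤ 2^k exp(−nε²/2). -/
open MeasureTheory ProbabilityTheory Real Finset
open scoped NNReal

/-! Write `d i = p̂ i - p i`. Since `∑ d i = 0`, the L1 deviation equals `2 ∑_{i ∈ A} d i` for
`A = {i | 0 ≤ d i}`, so it can only reach `ε` if `p̂(A) - p(A) ≥ ε / 2` for one of the `2 ^ k`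
sets `A`. For a fixed `A`, `n (p̂(A) - p(A))` is a sum of `n` independent centred indicators,
whose tail Hoeffding's inequality bounds by `exp (-n ε² / 2)`; a union bound over `A` finishes. -/

lemma hasSubgaussianMGF_indicator_sub_measureReal {α : Type*} [MeasurableSpace α]
    (μ : Measure α) [IsProbabilityMeasure μ] {s : Set α} (hs : MeasurableSet s) :
    HasSubgaussianMGF (fun x => s.indicator 1 x - μ.real s) (1 / 4) μ := by
  have h := hasSubgaussianMGF_of_mem_Icc (X := s.indicator 1) (a := 0) (b := 1)
    (measurable_const.indicator hs).aemeasurable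
    (ae_of_all μ fun x => by by_cases hx : x ∈ s <;> simp [hx])
  convert h using 1
  · simp only [integral_indicator_one hs]
  · norm_num

lemma ProbabilityTheory.HasSubgaussianMGF.measureReal_pi_sum_ge_le {α ι : Type*}
    [MeasurableSpace α] [Fintype ι] {μ : Measure α} [IsProbabilityMeasure μ] {X : α → ℝ} {c : ℝ≥0}
    (hX : HasSubgaussianMGF X c μ) {t : ℝ} (ht : 0 ≤ t) :
    (Measure.pi fun _ : ι => μ).real {ω | t ≤ ∑ j, X (ω j)}
      ≤ exp (-t ^ 2 / (2 * (Fintype.card ι * c))) := by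
  have hX_pi (j : ι) : HasSubgaussianMGF (fun ω => X (ω j)) c (Measure.pi fun _ : ι => μ) := by
    refine HasSubgaussianMGF.of_map (X := X) (measurable_pi_apply j).aemeasurable ?_
    rwa [(measurePreserving_eval (fun _ : ι => μ) j).map_eq]
  simpa using measure_sum_ge_le_of_iIndepFun
    (iIndepFun_pi (μ := fun _ : ι => μ) fun _ => hX.aemeasurable) (s := univ)
    (fun j _ => hX_pi j) ht

lemma sum_abs_eq_two_mul_sum_filter_nonneg {ι : Type*} [Fintype ι] (f : ι → ℝ)
    (hf : ∑ i, f i = 0) : ∑ i, |f i| = 2 * ∑ i with 0 ≤ f i, f i := by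
  have h (x : ℝ) : |x| = 2 * (if 0 ≤ x then x else 0) - x := by
    split_ifs with hx
    · rw [abs_of_nonneg hx]; ring
    · rw [abs_of_neg (not_le.1 hx)]; ring
  simp_rw [h, sum_sub_distrib, ← mul_sum, sum_filter, hf, sub_zero]

lemma sum_card_fiber_div_sub_measureReal {α ι : Type*} [MeasurableSpace α]
    [MeasurableSingletonClass α] [DecidableEq α] [Fintype ι] (μ : Measure α) [IsFiniteMeasure μ]
    (ω : ι → α) (c : ℝ) (A : Finset α) :
    ∑ i ∈ A, ((#{j | ω j = i} : ℝ) / c - μ.real {i}) = (#{j | ω j ∈ A} : ℝ) / c - μ.real A := by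
  rw [sum_sub_distrib, ← sum_div, sum_measureReal_singleton, ← Nat.cast_sum,
    sum_card_fiberwise_eq_card_filter]

lemma exists_finset_le_sum_indicator_sub {α : Type*} [MeasurableSpace α]
    [MeasurableSingletonClass α] [DecidableEq α] [Fintype α] (μ : Measure α)
    [IsProbabilityMeasure μ] {n : ℕ} (hn : 0 < n) (ω : Fin n → α) {ε : ℝ}
    (h : ε ≤ ∑ i, |(#{j | ω j = i} : ℝ) / n - μ.real {i}|) :
    ∃ A : Finset α, n * ε / 2 ≤ ∑ j, ((A : Set α).indicator 1 (ω j) - μ.real A) := by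
  have hn' : (0 : ℝ) < n := by exact_mod_cast hn
  have hsum : ∑ i, ((#{j | ω j = i} : ℝ) / n - μ.real {i}) = 0 := by
    rw [sum_card_fiber_div_sub_measureReal]
    simp [hn'.ne']
  rw [sum_abs_eq_two_mul_sum_filter_nonneg _ hsum, sum_card_fiber_div_sub_measureReal] at h
  set A : Finset α := {i | 0 ≤ (#{j | ω j = i} : ℝ) / n - μ.real {i}}
  refine ⟨A, ?_⟩
  simp only [sum_sub_distrib, Set.indicator_apply, Finset.mem_coe, Pi.one_apply, sum_boole,
    sum_const, card_univ, Fintype.card_fin, nsmul_eq_mul]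
  calc n * ε / 2 ≤ n * ((#{j | ω j ∈ A} : ℝ) / n - μ.real A) := by nlinarith
    _ = #{j | ω j ∈ A} - n * μ.real A := by field_simp

theorem bretagnolle_huber_carol_general
    (k n : ℕ) (D : Measure (Fin k)) [IsProbabilityMeasure D]
    (ε : ℝ) (hε0 : 0 < ε) :
    ((Measure.pi fun _ : Fin n => D)
        {ω | ε ≤ ∑ i : Fin k,
          |((Finset.univ.filter fun j => ω j = i).card : ℝ) / n - (D {i}).toReal|}).toReal
      ≤ 2 ^ k * Real.exp (-(n : ℝ) * ε ^ 2 / 2) := by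
  set μ := Measure.pi fun _ : Fin n => D
  rcases n.eq_zero_or_pos with rfl | hn
  · rw [CharP.cast_eq_zero, neg_zero, zero_mul, zero_div, exp_zero, mul_one]
    exact measureReal_le_one.trans (one_le_pow₀ one_le_two)
  set E : Finset (Fin k) → Set (Fin n → Fin k) := fun A =>
    {ω | n * ε / 2 ≤ ∑ j, ((A : Set (Fin k)).indicator 1 (ω j) - D.real A)}
  have hsub : {ω : Fin n → Fin k | ε ≤ ∑ i, |(#{j | ω j = i} : ℝ) / n - D.real {i}|} ⊆
      ⋃ A, E A := fun ω hω => Set.mem_iUnion.2 (exists_finset_le_sum_indicator_sub D hn ω hω)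
  have hE (A : Finset (Fin k)) : μ.real (E A) ≤ exp (-(n : ℝ) * ε ^ 2 / 2) := by
    refine ((hasSubgaussianMGF_indicator_sub_measureReal D A.measurableSet
      ).measureReal_pi_sum_ge_le (by positivity)).trans_eq ?_
    rw [Fintype.card_fin]
    congr 1
    push_cast
    field_simp
    ring
  calc μ.real _ ≤ ∑ A, μ.real (E A) :=
        (measureReal_mono hsub).trans (measureReal_iUnion_fintype_le E)
    _ ≤ ∑ _A : Finset (Fin k), exp (-(n : ℝ) * ε ^ 2 / 2) := sum_le_sum fun A _ => hE A
    _ = 2 ^ k * exp (-(n : ℝ) * ε ^ 2 / 2) := by simp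

/-- Bretagnolle–Huber–Carol inequality: the L1 deviation of the empirical
distribution of n i.i.d. samples from a categorical distribution on k outcomes
exceeds ε with probability at most 2^k exp(−nε²/2). -/
theorem bretagnolle_huber_carol
    (k n : ℕ) (D : Measure (Fin k)) [IsProbabilityMeasure D]
    (ε : ℝ) (hε0 : 0 < ε) (hε1 : ε < 1) :
    ((Measure.pi fun _ : Fin n => D)
        {ω | ε ≤ ∑ i : Fin k,
          |((Finset.univ.filter fun j => ω j = i).card : ℝ) / n - (D {i}).toReal|}).toReal
      ≤ 2 ^ k * Real.exp (-(n : ℝ) * ε ^ 2 / 2) :=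
  bretagnolle_huber_carol_general k n D ε hε0
end
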